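/- Let C be a union of closed curves in ℝ^d with ε-sample S for some ε ≤ 1, let a and b be consecutive sample points (a → b), and let p be a point strictly between a and b on the arc [a,b]. Then d(p,S) = min(d(p,a), d(p,b)), and d(p,S) < d(p,s) for every sample point s ∉ {a,b}. -/

import Mathlib

open Metric Set EuclideanGeometry RealInnerProductSpace

noncomputable section

/-- Euclidean space `ℝ^d`. -/
abbrev Euc (d : ℕ) := EuclideanSpace ℝ (Fin d)

/-- The medial axis of `C`: points not having a unique closest point in `C`. -/
def medialAxis {d : ℕ} (C : Set (Euc d)) : Set (Euc d) :=
  {x | ¬ ∃! y, y ∈ C ∧ dist x y = Metric.infDist x C}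

/-- Local feature size: distance to the medial axis. -/
def lfs {d : ℕ} (C : Set (Euc d)) (p : Euc d) : ℝ :=
  Metric.infDist p (medialAxis C)

/-- `S` is an ε-sample of `C`. -/
def IsEpsSample {d : ℕ} (ε : ℝ) (C S : Set (Euc d)) : Prop :=
  S ⊆ C ∧ S.Finite ∧ ∀ p ∈ C, Metric.infDist p S < ε * lfs C p

/-- A closed curve: image of an injective continuous map from the circle. -/
def IsClosedCurve {d : ℕ} (c : Set (Euc d)) : Prop :=
  ∃ γ : AddCircle (1 : ℝ) → Euc d, Continuous γ ∧ Function.Injective γ ∧ Set.range γ = c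

/-- A finite disjoint union of closed curves. -/
def IsCurveUnion {d : ℕ} (C : Set (Euc d)) : Prop :=
  ∃ F : Finset (Set (Euc d)), (∀ c ∈ F, IsClosedCurve c) ∧
    (F : Set (Set (Euc d))).Pairwise Disjoint ∧ C = ⋃ c ∈ F, c

/-- An (injective continuous) arc in `C` from `a` to `b`, parametrized on `[0,1]`. -/
def IsArc {d : ℕ} (C : Set (Euc d)) (γ : ℝ → Euc d) (a b : Euc d) : Prop :=
  ContinuousOn γ (Set.Icc 0 1) ∧ Set.InjOn γ (Set.Icc 0 1) ∧
  γ 0 = a ∧ γ 1 = b ∧ γ '' Set.Icc 0 1 ⊆ C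

/-- `a → b`: consecutive sample points, via the arc `γ` whose interior misses `S`. -/
def ConsecutiveArc {d : ℕ} (C S : Set (Euc d)) (γ : ℝ → Euc d) (a b : Euc d) : Prop :=
  a ∈ S ∧ b ∈ S ∧ IsArc C γ a b ∧ ∀ t ∈ Set.Ioo (0:ℝ) 1, γ t ∉ S

/-- `X(a,b)`: points equidistant from `a`, `b` at distance `d(a,b)/(ε√(4-ε²))`. -/
def Xset {d : ℕ} (ε : ℝ) (a b : Euc d) : Set (Euc d) :=
  {x | dist x a = dist a b / (ε * Real.sqrt (4 - ε ^ 2)) ∧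
       dist x b = dist a b / (ε * Real.sqrt (4 - ε ^ 2))}

/-- Compatibility of the triple `(a,b,c)`. -/
def Compatible {d : ℕ} (ε : ℝ) (a b c : Euc d) : Prop :=
  (∀ x ∈ Xset ε a b, c ∉ Metric.closedBall x (dist x b)) ∧
  (∀ y ∈ Xset ε b c, a ∉ Metric.closedBall y (dist y b))

/-!
Let `p = γ t` and `r = d(p, S)`, so `r < lfs(p)`. Every point of the closed ball `B(p, r)` then
has a unique nearest point on `C`, and the nearest-point map is continuous there. If a sample
`s ∉ {a, b}` had `d(p, s) = r`, projecting the segment `[p, s]` onto `C` would give a connected set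
`K ⊆ C` from `p` to `s` whose points other than `s` lie in the open ball `B(p, r)`. `K` stays on
the closed curve through `p`, and since `s` is off the arc `[a, b]`, `K` has to leave the arc
through `a` or `b`; that endpoint is then a sample closer to `p` than `r = d(p, S)`.
-/

open Function Filter Topology

section IntermediateValue

variable {α δ : Type*} [ConditionallyCompleteLinearOrder α] [TopologicalSpace α] [OrderTopology α]
  [DenselyOrdered α] [LinearOrder δ] [TopologicalSpace δ] [OrderClosedTopology δ]

theorem ContinuousOn.mem_uIoo_of_injOn_Icc {f : α → δ} {a b t : α}
    (hf : ContinuousOn f (Icc a b)) (hinj : InjOn f (Icc a b)) (ht : t ∈ Ioo a b) :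
    f t ∈ uIoo (f a) (f b) := by
  have hab : a < b := ht.1.trans ht.2
  have hta : t ∈ Icc a b := Ioo_subset_Icc_self ht
  rcases hf.strictMonoOn_of_injOn_Icc' hab.le hinj with hmono | hanti
  · rw [uIoo_of_lt (hmono (left_mem_Icc.2 hab.le) (right_mem_Icc.2 hab.le) hab)]
    exact ⟨hmono (left_mem_Icc.2 hab.le) hta ht.1, hmono hta (right_mem_Icc.2 hab.le) ht.2⟩
  · rw [uIoo_of_gt (hanti (left_mem_Icc.2 hab.le) (right_mem_Icc.2 hab.le) hab)]
    exact ⟨hanti hta (right_mem_Icc.2 hab.le) ht.2, hanti (left_mem_Icc.2 hab.le) hta ht.1⟩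

end IntermediateValue

namespace AddCircle

variable {T : ℝ}

theorem exists_lift_of_continuousOn_Icc {h : ℝ → AddCircle T} (hh : ContinuousOn h (Icc 0 1)) :
    ∃ Γ : ℝ → ℝ, Continuous Γ ∧ ∀ u ∈ Icc (0 : ℝ) 1, (Γ u : AddCircle T) = h u := by
  obtain ⟨x₀, hx₀⟩ := QuotientAddGroup.mk_surjective (h 0)
  obtain ⟨Γ, hΓ, -⟩ := (isCoveringMap_coe T).exists_path_lifts
    ⟨fun u : unitInterval => h u, hh.domRestrict⟩ x₀ hx₀.symm
  refine ⟨Γ ∘ projIcc 0 1 zero_le_one, Γ.continuous.comp continuous_projIcc, fun u hu => ?_⟩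
  rw [comp_apply, projIcc_of_mem _ hu]
  exact congrFun hΓ ⟨u, hu⟩

theorem abs_sub_lt_of_injOn_coe [Fact (0 < T)] {Γ : ℝ → ℝ} (hΓ : ContinuousOn Γ (Icc 0 1))
    (hinj : InjOn (fun u => (Γ u : AddCircle T)) (Icc 0 1)) : |Γ 1 - Γ 0| < T := by
  have hT : (0 : ℝ) < T := Fact.out
  have hIVT := intermediate_value_uIcc (a := (0 : ℝ)) (b := 1) (f := Γ)
    (by rwa [uIcc_of_le zero_le_one])
  rw [uIcc_of_le zero_le_one] at hIVT
  rw [← max_sub_min_eq_abs]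
  by_contra! hle
  obtain ⟨v, hv, hvm⟩ : ∃ v ∈ Icc (0 : ℝ) 1, Γ v = min (Γ 0) (Γ 1) := by
    rcases min_choice (Γ 0) (Γ 1) with h | h
    exacts [⟨0, left_mem_Icc.2 zero_le_one, h.symm⟩, ⟨1, right_mem_Icc.2 zero_le_one, h.symm⟩]
  obtain ⟨u, hu, hum⟩ := hIVT
    (show min (Γ 0) (Γ 1) + T ∈ Icc (min (Γ 0) (Γ 1)) (max (Γ 0) (Γ 1)) by
      constructor <;> linarith)
  have huv : u = v := hinj hu hv <| by simp only [hum, hvm, coe_add_period]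
  linarith [congrArg Γ huv]

theorem subset_image_Icc_of_isPreconnected [Fact (0 < T)] {h : ℝ → AddCircle T}
    (hcont : ContinuousOn h (Icc 0 1)) (hinj : InjOn h (Icc 0 1)) {K : Set (AddCircle T)}
    (hK : IsPreconnected K) (h0 : h 0 ∉ K) (h1 : h 1 ∉ K) {t : ℝ} (ht : t ∈ Ioo 0 1)
    (htK : h t ∈ K) : K ⊆ h '' Icc 0 1 := by
  obtain ⟨Γ, hΓ, hΓh⟩ := exists_lift_of_continuousOn_Icc hcont
  have hΓinj : InjOn Γ (Icc 0 1) := fun u hu v hv huv =>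
    hinj hu hv (by rw [← hΓh u hu, ← hΓh v hv, huv])
  set m := min (Γ 0) (Γ 1)
  set M := max (Γ 0) (Γ 1)
  have hend : ∀ x, x = Γ 0 ∨ x = Γ 1 → ∃ v ∈ Icc (0 : ℝ) 1, Γ v = x ∧ h v ∉ K := by
    rintro x (rfl | rfl)
    exacts [⟨0, left_mem_Icc.2 zero_le_one, rfl, h0⟩, ⟨1, right_mem_Icc.2 zero_le_one, rfl, h1⟩]
  have hIcc : Icc m M ⊆ Γ '' Icc 0 1 := by
    have := intermediate_value_uIcc (a := 0) (b := 1) hΓ.continuousOn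
    rwa [uIcc_of_le zero_le_one] at this
  have harc : (↑) '' Icc m M ⊆ h '' Icc 0 1 := by
    rintro _ ⟨x, hx, rfl⟩
    obtain ⟨u, hu, rfl⟩ := hIcc hx
    exact ⟨u, hu, (hΓh u hu).symm⟩
  have hMm : M < m + T := by
    have := abs_sub_lt_of_injOn_coe hΓ.continuousOn (T := T) fun u hu v hv huv =>
      hinj hu hv (by rwa [← hΓh u hu, ← hΓh v hv])
    linarith [max_sub_min_eq_abs (Γ 0) (Γ 1)]
  have htm : Γ t ∈ Ioo m M := hΓ.continuousOn.mem_uIoo_of_injOn_Icc hΓinj ht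
  obtain ⟨v, hv, hvm, hvK⟩ := hend m (min_choice _ _)
  obtain ⟨w, hw, hwM, hwK⟩ := hend M (max_choice _ _)
  -- Read through the chart of the circle at `↑m`, `K` becomes an interval of `ℝ` containing
  -- `Γ t ∈ (m, M)`; a point of `K` off the arc lies in `(M, m + T)`, forcing `↑M = h w` into `K`.
  let e := openPartialHomeomorphCoe T m
  have hKt : K ⊆ e.target := fun z hz hzm => hvK (by rw [← hΓh v hv, hvm, ← hzm]; exact hz)
  intro s hsK
  by_contra hs
  have hx : e.symm s ∈ Ioo m (m + T) := e.map_target (hKt hsK)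
  have hxM : M < e.symm s := by
    by_contra! hle
    exact hs (harc ⟨e.symm s, ⟨hx.1.le, hle⟩, e.right_inv (hKt hsK)⟩)
  have htL : e.symm (h t) = Γ t := by
    rw [← hΓh t (Ioo_subset_Icc_self ht)]
    exact e.left_inv ⟨htm.1, htm.2.trans hMm⟩
  obtain ⟨z, hzK, hzM⟩ := (hK.image _ (e.continuousOn_symm.mono hKt)).Icc_subset
    (mem_image_of_mem _ htK) (mem_image_of_mem _ hsK) ⟨htL ▸ htm.2.le, hxM.le⟩
  apply hwK
  rw [← hΓh w hw, hwM, ← hzM]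
  convert hzK using 1
  exact e.right_inv (hKt hzK)

end AddCircle

theorem subset_image_Icc_of_isPreconnected_of_subset_range {X : Type*} [TopologicalSpace X]
    [T2Space X] {T : ℝ} [Fact (0 < T)] {g : AddCircle T → X} (hg : Continuous g)
    (hgi : Injective g) {γ : ℝ → X} (hγ : ContinuousOn γ (Icc 0 1)) (hγi : InjOn γ (Icc 0 1))
    (hγg : γ '' Icc 0 1 ⊆ range g) {K : Set X} (hK : IsPreconnected K) (hKg : K ⊆ range g)
    (h0 : γ 0 ∉ K) (h1 : γ 1 ∉ K) {t : ℝ} (ht : t ∈ Ioo 0 1) (htK : γ t ∈ K) :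
    K ⊆ γ '' Icc 0 1 := by
  have hemb := hg.isClosedEmbedding hgi
  have hgh : ∀ u ∈ Icc (0 : ℝ) 1, g (invFun g (γ u)) = γ u := fun u hu =>
    invFun_eq (hγg (mem_image_of_mem γ hu))
  have hcont : ContinuousOn (invFun g ∘ γ) (Icc 0 1) :=
    hemb.isInducing.continuousOn_iff.2 (hγ.congr fun u hu => hgh u hu)
  have hinj : InjOn (invFun g ∘ γ) (Icc 0 1) := fun u hu v hv huv =>
    hγi hu hv (by rw [← hgh u hu, ← hgh v hv]; exact congrArg g huv)
  have hsub := AddCircle.subset_image_Icc_of_isPreconnected hcont hinj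
    (hK.preimage_of_isClosedMap hgi hemb.isClosedMap hKg)
    (by simpa [hgh 0 (left_mem_Icc.2 zero_le_one)] using h0)
    (by simpa [hgh 1 (right_mem_Icc.2 zero_le_one)] using h1) ht
    (by simpa [hgh t (Ioo_subset_Icc_self ht)] using htK)
  rintro _ hx
  obtain ⟨z, rfl⟩ := hKg hx
  obtain ⟨u, hu, hzu⟩ := hsub (show z ∈ g ⁻¹' K from hx)
  exact ⟨u, hu, by rw [← hgh u hu, ← hzu, comp_apply]⟩

theorem IsPreconnected.subset_of_mem_of_pairwise_disjoint {X : Type*} [TopologicalSpace X]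
    {F : Finset (Set X)} (hcl : ∀ c ∈ F, IsClosed c)
    (hdisj : (F : Set (Set X)).Pairwise Disjoint) {K : Set X} (hK : IsPreconnected K)
    (hKF : K ⊆ ⋃ c ∈ F, c) {c : Set X} (hc : c ∈ F) {x : X} (hxK : x ∈ K) (hxc : x ∈ c) :
    K ⊆ c := by
  classical
  set R := ⋃ c' ∈ F.erase c, c'
  have hR : IsClosed R := isClosed_biUnion_finset fun c' hc' => hcl c' (Finset.mem_of_mem_erase hc')
  have hcR : Disjoint c R := disjoint_iUnion₂_right.2 fun c' hc' =>
    hdisj hc (Finset.mem_of_mem_erase hc') (Finset.ne_of_mem_erase hc').symm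
  have hKcR : K ⊆ c ∪ R := by
    intro z hz
    obtain ⟨c', hc', hzc'⟩ := mem_iUnion₂.1 (hKF hz)
    by_cases h : c' = c
    · exact Or.inl (h ▸ hzc')
    · exact Or.inr (mem_iUnion₂.2 ⟨c', Finset.mem_erase.2 ⟨h, hc'⟩, hzc'⟩)
  refine (isPreconnected_iff_subset_of_disjoint_closed.1 hK c R (hcl c hc) hR hKcR
    (by rw [hcR.inter_eq, inter_empty])).resolve_right fun hKR => ?_
  exact disjoint_left.1 hcR hxc (hKR hxK)

theorem continuousOn_of_existsUnique_nearest {X : Type*} [MetricSpace X] {C T : Set X}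
    (hC : IsCompact C) {π : X → X} (hπ : ∀ x, π x ∈ C ∧ dist x (π x) = infDist x C)
    (huniq : ∀ x ∈ T, ∃! y, y ∈ C ∧ dist x y = infDist x C) : ContinuousOn π T := by
  intro x hx
  refine hC.tendsto_nhds_of_unique_mapClusterPt (Eventually.of_forall fun z => (hπ z).1)
    fun y hy hclust => (huniq x hx).unique ⟨hy, ?_⟩ (hπ x)
  obtain ⟨U, hU, hUy⟩ := mapClusterPt_iff_ultrafilter.1 hclust
  have hUx : Tendsto id (U : Filter X) (𝓝 x) := hU.trans nhdsWithin_le_nhds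
  exact tendsto_nhds_unique (hUx.dist hUy)
    (((continuous_infDist_pt C).tendsto x).comp hUx |>.congr fun z => (hπ z).2.symm)

theorem exists_isPreconnected_of_existsUnique_nearest {E : Type*} [NormedAddCommGroup E]
    [NormedSpace ℝ E] {C : Set E} (hC : IsCompact C) {p s : E} (hp : p ∈ C) (hs : s ∈ C)
    (huniq : ∀ x ∈ closedBall p (dist p s), ∃! y, y ∈ C ∧ dist x y = infDist x C) :
    ∃ K ⊆ C, IsPreconnected K ∧ p ∈ K ∧ s ∈ K ∧ K \ {s} ⊆ ball p (dist p s) := by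
  choose π hπC hπd using hC.exists_infDist_eq_dist ⟨p, hp⟩
  have hπ : ∀ x, π x ∈ C ∧ dist x (π x) = infDist x C := fun x => ⟨hπC x, (hπd x).symm⟩
  set r := dist p s
  have hfix : ∀ y ∈ C, dist y p ≤ r → π y = y := fun y hy hyp =>
    (huniq y (mem_closedBall.2 hyp)).unique (hπ y) ⟨hy, by rw [dist_self, infDist_zero_of_mem hy]⟩
  set σ : ℝ → E := ⇑(AffineMap.lineMap p s : ℝ →ᵃ[ℝ] E)
  have hσ : ∀ u ∈ Icc (0 : ℝ) 1, dist p (σ u) = u * r ∧ dist (σ u) s = (1 - u) * r :=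
    fun u hu => ⟨by rw [dist_left_lineMap, Real.norm_of_nonneg hu.1],
      by rw [dist_lineMap_right, Real.norm_of_nonneg (sub_nonneg.2 hu.2)]⟩
  have hσball : MapsTo σ (Icc 0 1) (closedBall p r) := fun u hu => by
    rw [mem_closedBall, dist_comm, (hσ u hu).1]
    exact mul_le_of_le_one_left dist_nonneg hu.2
  refine ⟨(π ∘ σ) '' Icc 0 1, ?_, ?_, ⟨0, left_mem_Icc.2 zero_le_one, ?_⟩,
    ⟨1, right_mem_Icc.2 zero_le_one, ?_⟩, ?_⟩
  · rintro _ ⟨u, -, rfl⟩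
    exact hπC _
  · exact isPreconnected_Icc.image _ ((continuousOn_of_existsUnique_nearest hC hπ huniq).comp
      AffineMap.lineMap_continuous.continuousOn hσball)
  · simp [σ, hfix p hp (by simp [r])]
  · simp [σ, hfix s hs (dist_comm s p).le]
  rintro _ ⟨⟨u, hu, rfl⟩, hne⟩
  rw [mem_ball, dist_comm]
  by_contra! hle
  rw [comp_apply] at hle hne
  obtain ⟨h1, h2⟩ := hσ u hu
  -- the triangle inequality through `σ u` makes `s` a second nearest point of `σ u`
  have hsu : dist (σ u) s = infDist (σ u) C := by
    refine le_antisymm ?_ (infDist_le_dist_of_mem hs)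
    calc dist (σ u) s = r - u * r := by rw [h2]; ring
      _ ≤ dist p (π (σ u)) - dist p (σ u) := by rw [h1]; linarith
      _ ≤ dist (σ u) (π (σ u)) := by linarith [dist_triangle p (σ u) (π (σ u))]
      _ = infDist (σ u) C := (hπ _).2
  exact hne ((huniq (σ u) (hσball hu)).unique (hπ _) ⟨hs, hsu⟩)

section Curves

variable {d : ℕ}

theorem existsUnique_nearest_of_dist_lt_lfs {C : Set (Euc d)} {p x : Euc d}
    (h : dist x p < lfs C p) : ∃! y, y ∈ C ∧ dist x y = infDist x C := by
  by_contra hx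
  have : lfs C p ≤ dist p x := infDist_le_dist_of_mem (show x ∈ medialAxis C from hx)
  rw [dist_comm] at h
  linarith

theorem IsClosedCurve.isCompact {c : Set (Euc d)} (hc : IsClosedCurve c) : IsCompact c := by
  obtain ⟨g, hg, -, rfl⟩ := hc
  exact isCompact_range hg

theorem IsCurveUnion.isCompact {C : Set (Euc d)} (hC : IsCurveUnion C) : IsCompact C := by
  obtain ⟨F, hF, -, rfl⟩ := hC
  exact F.finite_toSet.isCompact_biUnion fun c hc => (hF c hc).isCompact

theorem IsCurveUnion.exists_closedCurve_superset {C : Set (Euc d)} (hC : IsCurveUnion C)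
    {x : Euc d} (hx : x ∈ C) :
    ∃ g : AddCircle (1 : ℝ) → Euc d, Continuous g ∧ Injective g ∧
      ∀ K ⊆ C, IsPreconnected K → x ∈ K → K ⊆ range g := by
  obtain ⟨F, hF, hdisj, rfl⟩ := hC
  obtain ⟨c, hc, hxc⟩ := mem_iUnion₂.1 hx
  obtain ⟨g, hg, hgi, rfl⟩ := hF c hc
  exact ⟨g, hg, hgi, fun K hKC hK hxK => hK.subset_of_mem_of_pairwise_disjoint
    (fun c' hc' => (hF c' hc').isCompact.isClosed) hdisj hKC hc hxK hxc⟩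

theorem ConsecutiveArc.infDist_lt_dist {C S : Set (Euc d)} (hC : IsCurveUnion C) (hSC : S ⊆ C)
    {a b : Euc d} {γ : ℝ → Euc d} (hab : ConsecutiveArc C S γ a b) {t : ℝ} (ht : t ∈ Ioo 0 1)
    (hlfs : infDist (γ t) S < lfs C (γ t)) {s : Euc d} (hs : s ∈ S) (hsa : s ≠ a)
    (hsb : s ≠ b) : infDist (γ t) S < dist (γ t) s := by
  obtain ⟨haS, hbS, ⟨hγc, hγi, rfl, rfl, hγC⟩, hint⟩ := hab
  have hpC : γ t ∈ C := hγC (mem_image_of_mem γ (Ioo_subset_Icc_self ht))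
  by_contra! hle
  obtain ⟨K, hKC, hK, hpK, hsK, hKball⟩ := exists_isPreconnected_of_existsUnique_nearest
    hC.isCompact hpC (hSC hs) fun x hx =>
      existsUnique_nearest_of_dist_lt_lfs ((mem_closedBall.1 hx).trans_lt (hle.trans_lt hlfs))
  obtain ⟨g, hg, hgi, hsub⟩ := hC.exists_closedCurve_superset hpC
  have hendpoint : γ 0 ∈ K ∨ γ 1 ∈ K := by
    by_contra! hout
    have : Fact ((0 : ℝ) < 1) := ⟨one_pos⟩
    obtain ⟨u, hu, rfl⟩ := subset_image_Icc_of_isPreconnected_of_subset_range hg hgi hγc hγi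
      (hsub _ hγC (isPreconnected_Icc.image γ hγc) (mem_image_of_mem γ (Ioo_subset_Icc_self ht)))
      hK (hsub K hKC hK hpK) hout.1 hout.2 ht hpK hsK
    rcases eq_endpoints_or_mem_Ioo_of_mem_Icc hu with rfl | rfl | hu'
    exacts [hsa rfl, hsb rfl, hint u hu' hs]
  have hnear : ∀ w ∈ S, w ∈ K → w = s := fun w hwS hwK => by_contra fun hws =>
    (mem_ball'.1 (hKball ⟨hwK, hws⟩)).not_ge (hle.trans (infDist_le_dist_of_mem hwS))
  rcases hendpoint with h | h
  exacts [hsa (hnear _ haS h).symm, hsb (hnear _ hbS h).symm]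

end Curves

theorem stmt2_general {d : ℕ} (ε : ℝ) (hε : ε ≤ 1)
    (C S : Set (Euc d)) (hC : IsCurveUnion C) (hS : IsEpsSample ε C S)
    (a b : Euc d) (γ : ℝ → Euc d) (hab : ConsecutiveArc C S γ a b)
    (t : ℝ) (ht : t ∈ Set.Ioo (0:ℝ) 1) :
    Metric.infDist (γ t) S = min (dist (γ t) a) (dist (γ t) b) ∧
    ∀ s ∈ S, s ≠ a → s ≠ b → Metric.infDist (γ t) S < dist (γ t) s := by
  obtain ⟨hSC, hSfin, hsample⟩ := hS
  have hpC : γ t ∈ C := hab.2.2.1.2.2.2.2 (mem_image_of_mem γ (Ioo_subset_Icc_self ht))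
  have hlfs : infDist (γ t) S < lfs C (γ t) :=
    (hsample _ hpC).trans_le (mul_le_of_le_one_left infDist_nonneg hε)
  have hfar := fun s hs hsa hsb => hab.infDist_lt_dist hC hSC ht hlfs (s := s) hs hsa hsb
  refine ⟨le_antisymm (le_min (infDist_le_dist_of_mem hab.1) (infDist_le_dist_of_mem hab.2.1)) ?_,
    hfar⟩
  obtain ⟨s, hs, hps⟩ := hSfin.isCompact.exists_infDist_eq_dist ⟨a, hab.1⟩ (γ t)
  rw [hps]
  by_cases hsa : s = a
  · exact hsa ▸ min_le_left _ _
  by_cases hsb : s = b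
  · exact hsb ▸ min_le_right _ _
  exact ((hfar s hs hsa hsb).ne hps).elim

theorem stmt2 {d : ℕ} (ε : ℝ) (hε0 : 0 < ε) (hε : ε ≤ 1)
    (C S : Set (Euc d)) (hC : IsCurveUnion C) (hS : IsEpsSample ε C S)
    (a b : Euc d) (γ : ℝ → Euc d) (hab : ConsecutiveArc C S γ a b)
    (t : ℝ) (ht : t ∈ Set.Ioo (0:ℝ) 1) :
    Metric.infDist (γ t) S = min (dist (γ t) a) (dist (γ t) b) ∧
    ∀ s ∈ S, s ≠ a → s ≠ b → Metric.infDist (γ t) S < dist (γ t) s :=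
  stmt2_general ε hε C S hC hS a b γ hab t ht
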